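/- If x is a constructible real number, then the degree of the field extension ℚ(x)/ℚ is a power of 2. -/

import Mathlib

/-!
Every constructible real lies in a quadratic tower `ℚ = K₀ ⊆ K₁ ⊆ ⋯ ⊆ Kₙ` with
`Kᵢ₊₁ = Kᵢ(aᵢ)` and `aᵢ² ∈ Kᵢ`: any two towers lie in a common third one, so the union of
all towers is a field, and it is closed under square roots. Each step has degree 1 or 2, so
`[Kₙ : ℚ]` is a power of 2 by the tower law, and `[ℚ(x) : ℚ]` divides it.
-/

/-- A real number is constructible by ruler and compass: it can be obtained from
the rationals by field operations and taking square roots of nonnegative numbers. -/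
inductive IsConstructibleR : ℝ → Prop
  | rat (q : ℚ) : IsConstructibleR (q : ℝ)
  | add {x y : ℝ} : IsConstructibleR x → IsConstructibleR y → IsConstructibleR (x + y)
  | neg {x : ℝ} : IsConstructibleR x → IsConstructibleR (-x)
  | mul {x y : ℝ} : IsConstructibleR x → IsConstructibleR y → IsConstructibleR (x * y)
  | inv {x : ℝ} : IsConstructibleR x → IsConstructibleR x⁻¹
  | sqrt {x : ℝ} : 0 ≤ x → IsConstructibleR x → IsConstructibleR (Real.sqrt x)

open IntermediateField Module Polynomial

section

variable {F E : Type*} [Field F] [Field E] [Algebra F E]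

theorem finrank_adjoin_simple_dvd_two {a : E} {b : F} (hab : a ^ 2 = algebraMap F E b) :
    finrank F F⟮a⟯ ∣ 2 := by
  have hroot : aeval a (X ^ 2 - C b) = 0 := by simp [hab]
  have hint : IsIntegral F a :=
    ⟨X ^ 2 - C b, monic_X_pow_sub_C b two_ne_zero, by simpa using hroot⟩
  have hle : (minpoly F a).natDegree ≤ 2 := by
    simpa using natDegree_le_of_dvd (minpoly.dvd F a hroot) (X_pow_sub_C_ne_zero two_pos b)
  have hpos := minpoly.natDegree_pos hint
  rw [adjoin.finrank hint, Nat.dvd_prime Nat.prime_two]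
  omega

theorem finrank_sup_adjoin_simple (K : IntermediateField F E) (a : E) :
    finrank F ↥(K ⊔ F⟮a⟯) = finrank F K * finrank K K⟮a⟯ := by
  rw [← restrictScalars_adjoin_eq_sup]
  exact (finrank_mul_finrank F K K⟮a⟯).symm

variable (F) in
inductive IsQuadraticTower : IntermediateField F E → Prop
  | bot : IsQuadraticTower ⊥
  | sup_adjoin {K : IntermediateField F E} {a : E} :
      IsQuadraticTower K → a ^ 2 ∈ K → IsQuadraticTower (K ⊔ F⟮a⟯)

namespace IsQuadraticTower

theorem finrank_eq_two_pow {K : IntermediateField F E} (hK : IsQuadraticTower F K) :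
    ∃ k, finrank F K = 2 ^ k := by
  induction hK with
  | bot => exact ⟨0, IntermediateField.finrank_bot⟩
  | @sup_adjoin K a _ ha ih =>
    obtain ⟨k, hk⟩ := ih
    have hdvd : finrank K K⟮a⟯ ∣ 2 := finrank_adjoin_simple_dvd_two (b := ⟨a ^ 2, ha⟩) rfl
    rw [finrank_sup_adjoin_simple, hk]
    rcases (Nat.dvd_prime Nat.prime_two).mp hdvd with h | h
    · exact ⟨k, by rw [h, mul_one]⟩
    · exact ⟨k + 1, by rw [h, pow_succ]⟩

theorem directedOn : DirectedOn (· ≤ ·) {K : IntermediateField F E | IsQuadraticTower F K} := by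
  intro K hK L hL
  induction hL with
  | bot => exact ⟨K, hK, le_rfl, bot_le⟩
  | @sup_adjoin L a _ ha ih =>
    obtain ⟨M, hM, hKM, hLM⟩ := ih
    exact ⟨M ⊔ F⟮a⟯, hM.sup_adjoin (hLM ha), le_sup_of_le_left hKM, sup_le_sup_right hLM _⟩

theorem mem_sSup_iff {x : E} :
    x ∈ sSup {K : IntermediateField F E | IsQuadraticTower F K} ↔
      ∃ K, IsQuadraticTower F K ∧ x ∈ K := by
  have : Nonempty {K : IntermediateField F E | IsQuadraticTower F K} := ⟨⟨⊥, bot⟩⟩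
  rw [sSup_eq_iSup', ← SetLike.mem_coe, coe_iSup_of_directed directedOn.directed_val,
    Set.mem_iUnion, Subtype.exists]
  simp only [Set.mem_ofPred_eq, exists_prop, SetLike.mem_coe]

end IsQuadraticTower

end

theorem IsConstructibleR.exists_isQuadraticTower {x : ℝ} (hx : IsConstructibleR x) :
    ∃ K : IntermediateField ℚ ℝ, IsQuadraticTower ℚ K ∧ x ∈ K := by
  rw [← IsQuadraticTower.mem_sSup_iff]
  induction hx with
  | rat q => exact SubfieldClass.ratCast_mem _ q
  | add _ _ hx hy => exact add_mem hx hy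
  | neg _ hx => exact neg_mem hx
  | mul _ _ hx hy => exact mul_mem hx hy
  | inv _ hx => exact inv_mem hx
  | @sqrt x hx0 _ hx =>
    rw [IsQuadraticTower.mem_sSup_iff] at hx ⊢
    obtain ⟨K, hK, hxK⟩ := hx
    have hsq : √x ^ 2 ∈ K := by rwa [Real.sq_sqrt hx0]
    exact ⟨_, hK.sup_adjoin hsq, le_sup_right (a := K) (mem_adjoin_simple_self ℚ _)⟩

open IntermediateField in
theorem constructible_degree_pow_two (x : ℝ) (hx : IsConstructibleR x) :
    ∃ k : ℕ, Module.finrank ℚ ℚ⟮x⟯ = 2 ^ k := by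
  obtain ⟨K, hK, hxK⟩ := hx.exists_isQuadraticTower
  obtain ⟨n, hn⟩ := hK.finrank_eq_two_pow
  have hdvd : finrank ℚ ℚ⟮x⟯ ∣ 2 ^ n :=
    hn ▸ finrank_dvd_of_le_right (adjoin_simple_le_iff.mpr hxK)
  obtain ⟨k, -, hk⟩ := (Nat.dvd_prime_pow Nat.prime_two).mp hdvd
  exact ⟨k, hk⟩
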